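/- Let 𝓜 be a compact set of real symmetric m×m matrices. Suppose that for every M ∈ 𝓜, writing M = M₊ − M₋ with M₊, M₋ positive semidefinite and ⟨M₊, M₋⟩ = 0 (the Moreau decomposition of M with respect to the positive semidefinite cone), there exists M' ∈ 𝓜 such that M' − M₊ is positive semidefinite. Then Ω_𝓜(X) = sup_{M ∈ 𝓜} trace(X M Xᵀ) is convex in X ∈ ℝ^{n×m}. -/

import Mathlib

open Matrix

/-
For `M ∈ 𝓜` with Moreau decomposition `M = M₊ - M₋` and `M' ∈ 𝓜` dominating `M₊`, the quadratic
forms satisfy `tr(X M Xᵀ) ≤ tr(X M₊ Xᵀ) ≤ tr(X M' Xᵀ) ≤ Ω_𝓜(X)`. The middle form is convex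
because `M₊` is positive semidefinite, so `Ω_𝓜` is the supremum of the convex functions
`X ↦ tr(X M₊ Xᵀ)` lying below it, hence convex.
-/

section ConvexMinorant

variable {𝕜 E β : Type*} [Semiring 𝕜] [PartialOrder 𝕜] [AddCommMonoid E] [SMul 𝕜 E]
  [AddCommMonoid β] [LinearOrder β] [IsOrderedAddMonoid β] [SMul 𝕜 β] [PosSMulMono 𝕜 β]
  {s : Set E} {f : E → β}

theorem convexOn_of_forall_lt_exists_minorant (hs : Convex 𝕜 s)
    (h : ∀ x ∈ s, ∀ c < f x, ∃ g : E → β, ConvexOn 𝕜 s g ∧ (∀ y ∈ s, g y ≤ f y) ∧ c < g x) :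
    ConvexOn 𝕜 s f := by
  refine ⟨hs, fun x hx y hy a b ha hb hab => ?_⟩
  by_contra! hlt
  obtain ⟨g, hg, hgf, hcg⟩ := h _ (hs hx hy ha hb hab) _ hlt
  refine (hcg.trans_le (hg.2 hx hy ha hb hab)).not_ge ?_
  exact add_le_add (smul_le_smul_of_nonneg_left (hgf x hx) ha)
    (smul_le_smul_of_nonneg_left (hgf y hy) hb)

end ConvexMinorant

section BoundedSupremum

variable {ι : Type*} {S : Set ι} {f : ι → ℝ}

theorem Real.bddAbove_range_iSup_mem (hf : BddAbove (f '' S)) :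
    BddAbove (Set.range fun i => ⨆ _ : i ∈ S, f i) := by
  obtain ⟨b, hb⟩ := hf
  refine ⟨max b 0, ?_⟩
  rintro _ ⟨i, rfl⟩
  exact Real.iSup_le (fun hi => (hb ⟨i, hi, rfl⟩).trans (le_max_left b 0)) (le_max_right b 0)

theorem Real.le_biSup (hf : BddAbove (f '' S)) {i : ι} (hi : i ∈ S) : f i ≤ ⨆ j ∈ S, f j := by
  simpa only [ciSup_pos hi] using le_ciSup (Real.bddAbove_range_iSup_mem hf) i

/-- The junk value `0` of an empty supremum enters `⨆ j ∈ S, f j` through every `i ∉ S`. -/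
theorem Real.biSup_nonneg_of_notMem (hf : BddAbove (f '' S)) {i : ι} (hi : i ∉ S) :
    0 ≤ ⨆ j ∈ S, f j := by
  simpa only [ciSup_neg hi, Real.sSup_empty] using le_ciSup (Real.bddAbove_range_iSup_mem hf) i

end BoundedSupremum

theorem convexOn_biSup_of_le_convexOn_le {E ι : Type*} [AddCommMonoid E] [SMul ℝ E] [Nonempty ι]
    {s : Set E} {S : Set ι} {q : ι → E → ℝ} (hs : Convex ℝ s)
    (hbdd : ∀ x ∈ s, BddAbove ((q · x) '' S))
    (hdom : ∀ i ∈ S, ∃ g : E → ℝ, ConvexOn ℝ s g ∧ (∀ x ∈ s, q i x ≤ g x) ∧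
      ∃ j ∈ S, ∀ x ∈ s, g x ≤ q j x) :
    ConvexOn ℝ s fun x => ⨆ i ∈ S, q i x := by
  refine convexOn_of_forall_lt_exists_minorant hs fun x hx c hc => ?_
  obtain ⟨i, hci⟩ := exists_lt_of_lt_ciSup hc
  by_cases hi : i ∈ S
  · obtain ⟨g, hg, hqg, j, hj, hgq⟩ := hdom i hi
    refine ⟨g, hg, fun y hy => (hgq y hy).trans (Real.le_biSup (hbdd y hy) hj), ?_⟩
    rw [ciSup_pos hi] at hci
    exact hci.trans_le (hqg x hx)
  · refine ⟨0, convexOn_const 0 hs, fun y hy => Real.biSup_nonneg_of_notMem (hbdd y hy) hi, ?_⟩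
    simpa only [ciSup_neg hi, Real.sSup_empty, Pi.zero_apply] using hci

namespace Matrix

variable {n m : Type*} [Fintype n] [Fintype m] {M N : Matrix m m ℝ}

theorem PosSemidef.trace_mul_mul_transpose_nonneg (hM : M.PosSemidef)
    (X : Matrix n m ℝ) : 0 ≤ (X * M * Xᵀ).trace := by
  simpa only [conjTranspose_eq_transpose_of_trivial] using
    (hM.mul_mul_conjTranspose_same X).trace_nonneg

theorem trace_mul_mul_transpose_mono (hMN : (N - M).PosSemidef) (X : Matrix n m ℝ) :
    (X * M * Xᵀ).trace ≤ (X * N * Xᵀ).trace := by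
  have := hMN.trace_mul_mul_transpose_nonneg X
  rwa [Matrix.mul_sub, Matrix.sub_mul, trace_sub, sub_nonneg] at this

theorem PosSemidef.convexOn_trace_mul_mul_transpose (hM : M.PosSemidef) :
    ConvexOn ℝ Set.univ fun X : Matrix n m ℝ => (X * M * Xᵀ).trace := by
  refine ⟨convex_univ, fun X _ Y _ a b ha hb hab => ?_⟩
  have hMT : Mᵀ = M := by rw [← conjTranspose_eq_transpose_of_trivial, hM.isHermitian.eq]
  have hcross : (Y * M * Xᵀ).trace = (X * M * Yᵀ).trace := by
    rw [← trace_transpose, transpose_mul, transpose_mul, transpose_transpose, hMT, Matrix.mul_assoc]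
  have hdiff := hM.trace_mul_mul_transpose_nonneg (X - Y)
  simp only [transpose_sub, Matrix.sub_mul, Matrix.mul_sub, trace_sub, hcross] at hdiff
  simp only [smul_eq_mul, transpose_add, transpose_smul, Matrix.add_mul, Matrix.mul_add,
    Matrix.smul_mul, Matrix.mul_smul, trace_add, trace_smul, hcross]
  obtain rfl : b = 1 - a := by linarith
  -- `q (a X + b Y) = a q X + b q Y - a b q (X - Y)` for `q X = tr(X M Xᵀ)` and `a + b = 1`
  nlinarith [mul_nonneg ha hb]

open scoped MatrixOrder in
theorem IsSymm.exists_moreau_decomposition [DecidableEq m] (hM : M.IsSymm) :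
    ∃ Mp Mm : Matrix m m ℝ, Mp.PosSemidef ∧ Mm.PosSemidef ∧ M = Mp - Mm ∧
      (Mpᵀ * Mm).trace = 0 := by
  have hMH : M.IsHermitian := by
    rwa [IsHermitian, conjTranspose_eq_transpose_of_trivial]
  have hp : M⁺.PosSemidef := nonneg_iff_posSemidef.mp (CFC.posPart_nonneg M)
  refine ⟨M⁺, M⁻, hp, nonneg_iff_posSemidef.mp (CFC.negPart_nonneg M),
    (CFC.posPart_sub_negPart M hMH).symm, ?_⟩
  rw [← conjTranspose_eq_transpose_of_trivial, hp.isHermitian.eq, CFC.posPart_mul_negPart,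
    trace_zero]

end Matrix

/-- If for every `M ∈ 𝓜` with Moreau decomposition `M = M₊ - M₋` there is `M' ∈ 𝓜`
with `M' - M₊` positive semidefinite, then the VGF of `𝓜` is convex. -/
theorem vgf_convex_of_proj_dominated {n m : ℕ}
    (𝓜 : Set (Matrix (Fin m) (Fin m) ℝ))
    (hcpt : IsCompact 𝓜) (hsym : ∀ M ∈ 𝓜, M.IsSymm)
    (h : ∀ M ∈ 𝓜, ∀ Mp Mm : Matrix (Fin m) (Fin m) ℝ,
      Mp.PosSemidef → Mm.PosSemidef → M = Mp - Mm → (Mpᵀ * Mm).trace = 0 →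
      ∃ M' ∈ 𝓜, (M' - Mp).PosSemidef) :
    ConvexOn ℝ Set.univ
      (fun X : Matrix (Fin n) (Fin m) ℝ => ⨆ M ∈ 𝓜, (X * M * Xᵀ).trace) := by
  refine convexOn_biSup_of_le_convexOn_le convex_univ
    (fun X _ => (hcpt.image (by fun_prop)).bddAbove) fun M hM => ?_
  obtain ⟨Mp, Mm, hp, hm, hdec, horth⟩ := (hsym M hM).exists_moreau_decomposition
  obtain ⟨M', hM', hdom⟩ := h M hM Mp Mm hp hm hdec horth
  have hMMp : (Mp - M).PosSemidef := by rwa [hdec, sub_sub_cancel]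
  exact ⟨_, hp.convexOn_trace_mul_mul_transpose,
    fun X _ => trace_mul_mul_transpose_mono hMMp X, M', hM',
    fun X _ => trace_mul_mul_transpose_mono hdom X⟩
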